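/- Mild virus case: if R_max = ρ(D_min^{−1} B) ≤ 1, then every equilibrium (x*, o*) of the coupled epidemic–opinion model is a healthy state, i.e., x* = 0; equivalently, no endemic equilibrium with x* ≥ 0, x* ≠ 0 exists. -/

import Mathlib

open Matrix Filter Set

noncomputable section

/-- The modified sign function: `1` if `0 ≤ x`, `-1` otherwise. -/
def sgnm (x : ℝ) : ℝ := if 0 ≤ x then 1 else -1

/-- Gauge transformation matrix `Φ(o) = diag(sgnm o₁, …, sgnm oₙ)`. -/
def gaugeMat {n : ℕ} (o : Fin n → ℝ) : Matrix (Fin n) (Fin n) ℝ :=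
  Matrix.diagonal fun i => sgnm (o i)

/-- Graph Laplacian of a nonnegative adjacency matrix with zero diagonal. -/
def lapOf {n : ℕ} (A : Matrix (Fin n) (Fin n) ℝ) : Matrix (Fin n) (Fin n) ℝ :=
  Matrix.diagonal (fun i => ∑ j, A i j) - A

/-- Irreducibility of a (nonnegative) matrix: between any two indices some power
has a strictly positive entry. -/
def MatIrreducible {n : ℕ} (M : Matrix (Fin n) (Fin n) ℝ) : Prop :=
  ∀ i j : Fin n, ∃ k : ℕ, 1 ≤ k ∧ 0 < (M ^ k) i j

/-- Spectral radius of a real square matrix, as the largest modulus of a complex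
eigenvalue. -/
def specRad {m : Type*} [Fintype m] [DecidableEq m] (A : Matrix m m ℝ) : ℝ :=
  sSup ((fun z : ℂ => ‖z‖) '' spectrum ℂ (A.map (algebraMap ℝ ℂ)))

/-- Spectral abscissa of a real square matrix, as the largest real part of a
complex eigenvalue. -/
def specAbs {m : Type*} [Fintype m] [DecidableEq m] (A : Matrix m m ℝ) : ℝ :=
  sSup (Complex.re '' spectrum ℂ (A.map (algebraMap ℝ ℂ)))

/-- A real square matrix is Hurwitz if all its (complex) eigenvalues have
negative real part. -/
def IsHurwitz {m : Type*} [Fintype m] [DecidableEq m] (A : Matrix m m ℝ) : Prop :=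
  ∀ z ∈ spectrum ℂ (A.map (algebraMap ℝ ℂ)), z.re < 0

/-- The data of the coupled networked SIS epidemic–opinion model over `n`
communities. -/
structure EpiOpModel (n : ℕ) where
  /-- healing rates -/
  δ : Fin n → ℝ
  /-- minimum healing rate -/
  δmin : ℝ
  /-- minimum infection rate -/
  βmin : ℝ
  /-- unweighted adjacency matrix `Ã` of the (strongly connected) epidemic graph -/
  Atil : Matrix (Fin n) (Fin n) ℝ
  /-- infection matrix `B = [β_ij]` -/
  B : Matrix (Fin n) (Fin n) ℝ
  /-- nonnegative adjacency matrix `Ā_u` of the (strongly connected) opinion graph -/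
  Au : Matrix (Fin n) (Fin n) ℝ
  δmin_pos : 0 < δmin
  δ_ge : ∀ i, δmin ≤ δ i
  βmin_pos : 0 < βmin
  Atil_01 : ∀ i j, Atil i j = 0 ∨ Atil i j = 1
  Atil_diag : ∀ i, Atil i i = 0
  B_edge : ∀ i j, Atil i j = 1 → βmin ≤ B i j
  B_off : ∀ i j, Atil i j = 0 → B i j = 0
  B_irred : MatIrreducible B
  Au_nonneg : ∀ i j, 0 ≤ Au i j
  Au_diag : ∀ i, Au i i = 0
  Au_irred : MatIrreducible Au

namespace EpiOpModel

/-- The state space `[0,1]^n × [−0.5, 0.5]^n`. -/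
def InBox {n : ℕ} (_M : EpiOpModel n) (x o : Fin n → ℝ) : Prop :=
  (∀ i, x i ∈ Set.Icc (0:ℝ) 1) ∧ (∀ i, o i ∈ Set.Icc (-(1/2) : ℝ) (1/2))

variable {n : ℕ} (M : EpiOpModel n)

/-- `B_min = β_min Ã`. -/
def Bmin : Matrix (Fin n) (Fin n) ℝ := M.βmin • M.Atil

/-- `D = diag(δ₁, …, δₙ)`. -/
def Dmax : Matrix (Fin n) (Fin n) ℝ := Matrix.diagonal M.δ

/-- `D_min = δ_min I`. -/
def Dmin : Matrix (Fin n) (Fin n) ℝ := M.δmin • (1 : Matrix (Fin n) (Fin n) ℝ)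

/-- Opinion-dependent healing matrix `D(o) = D_min + (D − D_min)(O + 0.5 I)`. -/
def Dmat (o : Fin n → ℝ) : Matrix (Fin n) (Fin n) ℝ :=
  Matrix.diagonal fun i => M.δmin + (M.δ i - M.δmin) * (o i + 1/2)

/-- Opinion-dependent infection matrix `B(o) = B − (O + 0.5 I)(B − B_min)`. -/
def Bmat (o : Fin n → ℝ) : Matrix (Fin n) (Fin n) ℝ :=
  Matrix.of fun i j => M.B i j - (o i + 1/2) * (M.B i j - M.Bmin i j)

/-- Laplacian `L̄_u` of the opinion adjacency matrix. -/
def Lu : Matrix (Fin n) (Fin n) ℝ := lapOf M.Au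

/-- Signed opinion Laplacian `Φ(o) L̄_u Φ(o)`. -/
def Lsgn (o : Fin n → ℝ) : Matrix (Fin n) (Fin n) ℝ :=
  gaugeMat o * M.Lu * gaugeMat o

/-- Epidemic vector field `ẋ = −D(o)x + (I − X)B(o)x`. -/
def fx (x o : Fin n → ℝ) : Fin n → ℝ :=
  -(M.Dmat o).mulVec x +
    (Matrix.diagonal fun i => 1 - x i).mulVec ((M.Bmat o).mulVec x)

/-- Opinion vector field `ȯ = x − (Φ(o) L̄_u Φ(o) + I) o − 0.5 e`. -/
def fo (x o : Fin n → ℝ) : Fin n → ℝ :=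
  x - (M.Lsgn o + 1).mulVec o - (fun _ => (1/2 : ℝ))

/-- Equilibria of the coupled system. -/
def IsEquilibrium (x o : Fin n → ℝ) : Prop := M.fx x o = 0 ∧ M.fo x o = 0

/-- Trajectories (solutions) of the coupled system. -/
def IsTrajectory (x o : ℝ → Fin n → ℝ) : Prop :=
  ∀ t : ℝ, ∀ i : Fin n,
    HasDerivAt (fun s => x s i) (M.fx (x t) (o t) i) t ∧
    HasDerivAt (fun s => o s i) (M.fo (x t) (o t) i) t

/-- The Opinion-Dependent Reproduction Number `R^o = ρ(D(o)⁻¹ B(o))`. -/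
def Rnum (o : Fin n → ℝ) : ℝ := specRad ((M.Dmat o)⁻¹ * M.Bmat o)

/-- `R_max = ρ(D_min⁻¹ B)`. -/
def Rmax : ℝ := specRad (M.Dmin⁻¹ * M.B)

/-- `R_min = ρ(D⁻¹ B_min)`. -/
def Rmin : ℝ := specRad (M.Dmax⁻¹ * M.Bmin)

/-- `W(o) = −D(o) + B(o)`. -/
def Wmat (o : Fin n → ℝ) : Matrix (Fin n) (Fin n) ℝ := -(M.Dmat o) + M.Bmat o

/-- Jacobian matrix of the coupled system evaluated at a healthy equilibrium
`(0, o)`: block lower triangular with diagonal blocks `W(o)` and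
`−(Φ(o) L̄_u Φ(o) + I)`. -/
def JacHealthy (o : Fin n → ℝ) : Matrix (Fin n ⊕ Fin n) (Fin n ⊕ Fin n) ℝ :=
  Matrix.fromBlocks (M.Wmat o) 0 1 (-(M.Lsgn o + 1))

/-- Lyapunov stability of an equilibrium of the coupled system. -/
def LyapunovStable (xe oe : Fin n → ℝ) : Prop :=
  ∀ ε > 0, ∃ δ > 0, ∀ x o : ℝ → Fin n → ℝ, M.IsTrajectory x o →
    dist (x 0, o 0) (xe, oe) < δ → ∀ t ≥ 0, dist (x t, o t) (xe, oe) < ε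

/-- Local exponential stability of an equilibrium of the coupled system. -/
def LocExpStable (xe oe : Fin n → ℝ) : Prop :=
  ∃ δ > 0, ∃ C > 0, ∃ α > 0, ∀ x o : ℝ → Fin n → ℝ, M.IsTrajectory x o →
    dist (x 0, o 0) (xe, oe) < δ →
    ∀ t ≥ 0, dist (x t, o t) (xe, oe) ≤
      C * Real.exp (-α * t) * dist (x 0, o 0) (xe, oe)

end EpiOpModel


/-! At an endemic equilibrium the balance `D(o) x = (I - X) B(o) x`, together with
`δ_min ≤ D(o)`, `B(o) ≤ B` and `x ≤ 1`, gives `δ_min x_i < (B x)_i` wherever `x_i > 0`, so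
`r x ≤ D_min⁻¹ B x` for some `r > 1`. For a nonnegative matrix `A`, a nonzero nonnegative `x`
with `r x ≤ A x` yields `r ^ k ≤ ‖A ^ k‖`, hence `r ≤ ρ(A)` by Gelfand's formula (the
Collatz–Wielandt bound), contradicting `R_max ≤ 1`. -/

open scoped Topology

lemma pi_norm_le_pi_norm_of_nonneg_of_le {ι : Type*} [Fintype ι] {u v : ι → ℝ} (hu : 0 ≤ u)
    (huv : u ≤ v) : ‖u‖ ≤ ‖v‖ :=
  (pi_norm_le_iff_of_nonneg (norm_nonneg v)).2 fun i => by
    rw [Real.norm_of_nonneg (hu i)]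
    exact (huv i).trans ((le_abs_self _).trans (norm_le_pi_norm v i))

namespace Matrix

variable {ι : Type*} [Fintype ι]

lemma mulVec_mono_of_nonneg {A : Matrix ι ι ℝ} (hA : ∀ i j, 0 ≤ A i j) {u v : ι → ℝ}
    (huv : u ≤ v) : A *ᵥ u ≤ A *ᵥ v :=
  fun i => dotProduct_le_dotProduct_of_nonneg_left huv (hA i)

lemma pow_smul_le_pow_mulVec [DecidableEq ι] {A : Matrix ι ι ℝ} (hA : ∀ i j, 0 ≤ A i j)
    {r : ℝ} (hr : 0 ≤ r) {x : ι → ℝ} (hAx : r • x ≤ A *ᵥ x) (k : ℕ) :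
    r ^ k • x ≤ (A ^ k) *ᵥ x := by
  induction k with
  | zero => simp
  | succ k ih =>
    calc r ^ (k + 1) • x = r ^ k • r • x := by rw [pow_succ, mul_smul]
      _ ≤ r ^ k • (A *ᵥ x) := smul_le_smul_of_nonneg_left hAx (pow_nonneg hr k)
      _ = A *ᵥ (r ^ k • x) := (mulVec_smul A _ x).symm
      _ ≤ A *ᵥ ((A ^ k) *ᵥ x) := mulVec_mono_of_nonneg hA ih
      _ = (A ^ (k + 1)) *ᵥ x := by rw [mulVec_mulVec, pow_succ']

section LinftyOpNorm

attribute [local instance] Matrix.linftyOpNormedAddCommGroup Matrix.linftyOpNormedRing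
  Matrix.linftyOpNormedAlgebra

variable [DecidableEq ι]

lemma linfty_opNorm_map_algebraMap (A : Matrix ι ι ℝ) : ‖A.map (algebraMap ℝ ℂ)‖ = ‖A‖ := by
  simp [linfty_opNorm_def]

lemma pow_le_linfty_opNorm_pow {A : Matrix ι ι ℝ} (hA : ∀ i j, 0 ≤ A i j) {x : ι → ℝ}
    (hx : 0 ≤ x) (hx0 : x ≠ 0) {r : ℝ} (hr : 0 ≤ r) (hAx : r • x ≤ A *ᵥ x) (k : ℕ) :
    r ^ k ≤ ‖A ^ k‖ := by
  have hxnorm : 0 < ‖x‖ := norm_pos_iff.2 hx0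
  refine le_of_mul_le_mul_right ?_ hxnorm
  calc r ^ k * ‖x‖ = ‖r ^ k • x‖ := by
        rw [norm_smul, Real.norm_of_nonneg (pow_nonneg hr k)]
    _ ≤ ‖(A ^ k) *ᵥ x‖ := pi_norm_le_pi_norm_of_nonneg_of_le (smul_nonneg (pow_nonneg hr k) hx)
        (pow_smul_le_pow_mulVec hA hr hAx k)
    _ ≤ ‖A ^ k‖ * ‖x‖ := linfty_opNorm_mulVec _ _

lemma ofReal_le_spectralRadius_of_smul_le_mulVec {A : Matrix ι ι ℝ} (hA : ∀ i j, 0 ≤ A i j)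
    {x : ι → ℝ} (hx : 0 ≤ x) (hx0 : x ≠ 0) {r : ℝ} (hr : 0 ≤ r) (hAx : r • x ≤ A *ᵥ x) :
    ENNReal.ofReal r ≤ spectralRadius ℂ (A.map (algebraMap ℝ ℂ)) := by
  have : CompleteSpace (Matrix ι ι ℂ) := FiniteDimensional.complete ℂ _
  refine ge_of_tendsto (spectrum.pow_norm_pow_one_div_tendsto_nhds_spectralRadius _) ?_
  filter_upwards [eventually_ne_atTop 0] with k hk
  refine ENNReal.ofReal_le_ofReal ?_
  calc r = (r ^ k) ^ (1 / (k : ℝ)) := by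
        rw [← Real.rpow_natCast, ← Real.rpow_mul hr, mul_one_div_cancel (by exact_mod_cast hk),
          Real.rpow_one]
    _ ≤ ‖A ^ k‖ ^ (1 / (k : ℝ)) := Real.rpow_le_rpow (pow_nonneg hr k)
        (pow_le_linfty_opNorm_pow hA hx hx0 hr hAx k) (by positivity)
    _ = ‖A.map (algebraMap ℝ ℂ) ^ k‖ ^ (1 / (k : ℝ)) := by
        rw [← linfty_opNorm_map_algebraMap, ← RingHom.mapMatrix_apply, map_pow,
          RingHom.mapMatrix_apply]

lemma spectralRadius_map_le_ofReal_specRad (A : Matrix ι ι ℝ) :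
    spectralRadius ℂ (A.map (algebraMap ℝ ℂ)) ≤ ENNReal.ofReal (specRad A) := by
  have : CompleteSpace (Matrix ι ι ℂ) := FiniteDimensional.complete ℂ _
  have hbdd : BddAbove ((fun z : ℂ => ‖z‖) '' spectrum ℂ (A.map (algebraMap ℝ ℂ))) :=
    (spectrum.isCompact _).bddAbove_image continuous_norm.continuousOn
  refine iSup₂_le fun z hz => ?_
  rw [← enorm_eq_nnnorm, ← ofReal_norm]
  exact ENNReal.ofReal_le_ofReal (le_csSup hbdd (mem_image_of_mem _ hz))

end LinftyOpNorm

lemma le_specRad_of_smul_le_mulVec [DecidableEq ι] {A : Matrix ι ι ℝ}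
    (hA : ∀ i j, 0 ≤ A i j) {x : ι → ℝ} (hx : 0 ≤ x) (hx0 : x ≠ 0) {r : ℝ} (hr : 0 < r)
    (hAx : r • x ≤ A *ᵥ x) : r ≤ specRad A := by
  have := (ofReal_le_spectralRadius_of_smul_le_mulVec hA hx hx0 hr.le hAx).trans
    (spectralRadius_map_le_ofReal_specRad A)
  exact (ENNReal.ofReal_le_ofReal_iff'.1 this).resolve_right hr.not_ge

end Matrix

lemma exists_one_lt_smul_le {ι : Type*} [Finite ι] {u v : ι → ℝ} (hv : 0 ≤ v)
    (huv : ∀ i, 0 < u i → u i < v i) : ∃ r : ℝ, 1 < r ∧ r • u ≤ v := by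
  have hev : ∀ᶠ r in 𝓝[>] (1 : ℝ), ∀ i, r * u i ≤ v i := by
    refine eventually_all.2 fun i => ?_
    rcases le_or_gt (u i) 0 with hui | hui
    · filter_upwards [self_mem_nhdsWithin] with r (hr : 1 < r)
      exact (mul_nonpos_of_nonneg_of_nonpos (by linarith) hui).trans (hv i)
    · have hlt : 1 < v i / u i := (one_lt_div hui).2 (huv i hui)
      filter_upwards [nhdsWithin_le_nhds (gt_mem_nhds hlt)] with r hr
      exact ((lt_div_iff₀ hui).1 hr).le
  obtain ⟨r, hru, hr⟩ := (hev.and self_mem_nhdsWithin).exists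
  exact ⟨r, hr, hru⟩

namespace EpiOpModel

variable {n : ℕ} (M : EpiOpModel n)

lemma B_nonneg (i j : Fin n) : 0 ≤ M.B i j := by
  rcases M.Atil_01 i j with h | h
  · exact (M.B_off i j h).ge
  · exact M.βmin_pos.le.trans (M.B_edge i j h)

lemma Bmin_le_B (i j : Fin n) : M.Bmin i j ≤ M.B i j := by
  rcases M.Atil_01 i j with h | h <;> simp [Bmin, h, M.B_nonneg, M.B_edge]

lemma Bmat_le_B {o : Fin n → ℝ} {i : Fin n} (hoi : -(1 / 2) ≤ o i) (j : Fin n) :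
    M.Bmat o i j ≤ M.B i j :=
  sub_le_self _ (mul_nonneg (by linarith) (sub_nonneg.2 (M.Bmin_le_B i j)))

lemma Dmin_inv_mul_B : M.Dmin⁻¹ * M.B = M.δmin⁻¹ • M.B := by
  have hinv : M.Dmin⁻¹ = M.δmin⁻¹ • (1 : Matrix (Fin n) (Fin n) ℝ) := by
    apply inv_eq_right_inv
    rw [Dmin, smul_mul_smul_comm, one_mul, mul_inv_cancel₀ M.δmin_pos.ne', one_smul]
  rw [hinv, smul_mul_assoc, one_mul]

lemma fx_apply (x o : Fin n → ℝ) (i : Fin n) :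
    M.fx x o i = -((M.δmin + (M.δ i - M.δmin) * (o i + 1 / 2)) * x i)
      + (1 - x i) * (M.Bmat o *ᵥ x) i := by
  simp only [fx, Dmat, Pi.add_apply, Pi.neg_apply, mulVec_diagonal]

lemma δmin_mul_lt_B_mulVec_of_fx_eq_zero {x o : Fin n → ℝ} (hbox : M.InBox x o)
    (hfx : M.fx x o = 0) {i : Fin n} (hxi : 0 < x i) : M.δmin * x i < (M.B *ᵥ x) i := by
  have hbalance : (M.δmin + (M.δ i - M.δmin) * (o i + 1 / 2)) * x i
      = (1 - x i) * (M.Bmat o *ᵥ x) i := by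
    have := M.fx_apply x o i
    rw [hfx, Pi.zero_apply] at this
    linarith
  set d := M.δmin + (M.δ i - M.δmin) * (o i + 1 / 2)
  set s := (M.Bmat o *ᵥ x) i
  have hd : M.δmin ≤ d :=
    le_add_of_nonneg_right (mul_nonneg (sub_nonneg.2 (M.δ_ge i)) (by linarith [(hbox.2 i).1]))
  have hs : s ≤ (M.B *ᵥ x) i :=
    dotProduct_le_dotProduct_of_nonneg_right (M.Bmat_le_B (hbox.2 i).1) fun j => (hbox.1 j).1
  have hs_pos : 0 < s := pos_of_mul_pos_right (hbalance ▸ mul_pos (M.δmin_pos.trans_le hd) hxi)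
    (sub_nonneg.2 (hbox.1 i).2)
  calc M.δmin * x i ≤ d * x i := mul_le_mul_of_nonneg_right hd hxi.le
    _ = (1 - x i) * s := hbalance
    _ < s := by nlinarith
    _ ≤ (M.B *ᵥ x) i := hs

end EpiOpModel

/-- Proposition 2, mild virus case: if `R_max = ρ(D_min⁻¹ B) ≤ 1`
then every equilibrium of the coupled model is a healthy state, i.e. `x* = 0`;
no endemic equilibrium exists. -/
theorem mild_virus_only_healthy_equilibria {n : ℕ} (M : EpiOpModel n)
    (hR : M.Rmax ≤ 1) (x o : Fin n → ℝ) (hbox : M.InBox x o)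
    (heq : M.IsEquilibrium x o) :
    x = 0 := by
  by_contra hx0
  have hx : 0 ≤ x := fun i => (hbox.1 i).1
  have hA : ∀ i j, 0 ≤ (M.Dmin⁻¹ * M.B) i j := fun i j => by
    rw [M.Dmin_inv_mul_B, Matrix.smul_apply, smul_eq_mul]
    exact mul_nonneg (inv_nonneg.2 M.δmin_pos.le) (M.B_nonneg i j)
  have hsub : ∀ i, 0 < x i → x i < ((M.Dmin⁻¹ * M.B) *ᵥ x) i := fun i hxi => by
    rw [M.Dmin_inv_mul_B, smul_mulVec, Pi.smul_apply, smul_eq_mul, lt_inv_mul_iff₀ M.δmin_pos]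
    exact M.δmin_mul_lt_B_mulVec_of_fx_eq_zero hbox heq.1 hxi
  obtain ⟨r, hr, hrx⟩ := exists_one_lt_smul_le (by simpa using mulVec_mono_of_nonneg hA hx) hsub
  have := le_specRad_of_smul_le_mulVec hA hx hx0 (by linarith) hrx
  exact hr.not_ge (this.trans hR)
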